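/- If Φ and Φ̂ evolve according to the extended KP flows, then for all k ≥ 1 the Lax equations hold: ∂P/∂t_k = [(P^k)₊, P], ∂P̂/∂t_k = [(P^k)₊, P̂], ∂P/∂t̂_k = [−(P̂^k)₋, P], ∂P̂/∂t̂_k = [−(P̂^k)₋, P̂]. Moreover all the flows ∂/∂t_k, ∂/∂t̂_l (k, l ≥ 1) pairwise commute when applied to Φ and to Φ̂. -/

import Mathlib

/-!
Every flow `∂_t` kills `∂`, so if `∂_t Φ = AΦ` then `∂_t` acts on `Φ ∂^{±1} Φ⁻¹`, and hence on
its powers and its inverse, as the commutator with `A`: these are the Lax equations. Since powers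
of `P` commute with each other, as do `P̂` and `P̂⁻¹`, inside such brackets `-(P^k)₋` may be traded
for `(P^k)₊` and the correction `δ_{k1} P̂⁻¹` dropped.

Two flows with `∂_s Φ = AΦ`, `∂_t Φ = BΦ` commute on `Φ` as soon as the zero-curvature equation
`∂_s B - ∂_t A = [A, B]` holds. When `A, B` are `X₊, Y₊` or `-X₋, -Y₋` for Lax operators `X, Y`,
the Lax equations give `∂_s Y - ∂_t X = [X₊, Y] + [Y₋, X] = [X₊, Y₊] + [Y₋, X₋]`; both parts being
closed under products, the two projections of this are `[X₊, Y₊]` and `[Y₋, X₋]`, which is the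
zero-curvature equation in either case.
-/

section

attribute [local instance] LieRing.ofAssociativeRing

variable {D : Type*} [Ring D]

structure IsLeibniz (d : D → D) : Prop where
  map_add : ∀ x y, d (x + y) = d x + d y
  map_mul : ∀ x y, d (x * y) = d x * y + x * d y

namespace IsLeibniz

variable {d d₁ d₂ : D → D}

theorem map_zero (hd : IsLeibniz d) : d 0 = 0 := (AddMonoidHom.mk' d hd.map_add).map_zero

theorem map_sub (hd : IsLeibniz d) (x y : D) : d (x - y) = d x - d y :=
  (AddMonoidHom.mk' d hd.map_add).map_sub x y

theorem map_neg (hd : IsLeibniz d) (x : D) : d (-x) = -d x :=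
  (AddMonoidHom.mk' d hd.map_add).map_neg x

theorem map_one (hd : IsLeibniz d) : d 1 = 0 := by
  simpa using hd.map_mul 1 1

theorem map_units_inv (hd : IsLeibniz d) (u : Dˣ) : d ↑u⁻¹ = -(↑u⁻¹ * d u * ↑u⁻¹) := by
  have h := hd.map_mul u ↑u⁻¹
  rw [Units.mul_inv, hd.map_one] at h
  calc d ↑u⁻¹ = ↑u⁻¹ * (u * d ↑u⁻¹) := by rw [← mul_assoc, Units.inv_mul, one_mul]
    _ = -(↑u⁻¹ * d u * ↑u⁻¹) := by rw [eq_neg_of_add_eq_zero_right h.symm]; noncomm_ring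

theorem map_units_inv_eq_zero (hd : IsLeibniz d) {u : Dˣ} (hu : d u = 0) :
    d ↑u⁻¹ = 0 := by
  rw [hd.map_units_inv, hu, mul_zero, zero_mul, neg_zero]

theorem map_pow_eq_zero (hd : IsLeibniz d) {x : D} (hx : d x = 0) (n : ℕ) :
    d (x ^ n) = 0 := by
  induction n with
  | zero => rw [pow_zero, hd.map_one]
  | succ n ih => rw [pow_succ, hd.map_mul, ih, hx, zero_mul, mul_zero, add_zero]

theorem sub_lie (hd : IsLeibniz d) (C : D) : IsLeibniz fun x => d x - ⁅C, x⁆ where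
  map_add x y := by rw [hd.map_add, lie_add]; abel
  map_mul x y := by simp only [hd.map_mul, Ring.lie_def]; noncomm_ring

theorem map_pow_eq_lie (hd : IsLeibniz d) {C x : D} (hx : d x = ⁅C, x⁆) (n : ℕ) :
    d (x ^ n) = ⁅C, x ^ n⁆ :=
  sub_eq_zero.mp <| (hd.sub_lie C).map_pow_eq_zero (sub_eq_zero.mpr hx) n

theorem map_units_pow_eq_lie (hd : IsLeibniz d) {C : D} {u : Dˣ} (hu : d u = ⁅C, (u : D)⁆)
    (n : ℕ) : d ↑(u ^ n) = ⁅C, ↑(u ^ n)⁆ := by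
  rw [Units.val_pow_eq_pow_val]
  exact hd.map_pow_eq_lie hu n

theorem map_units_inv_eq_lie (hd : IsLeibniz d) {C : D} {u : Dˣ} (hu : d u = ⁅C, (u : D)⁆) :
    d ↑u⁻¹ = ⁅C, ↑u⁻¹⁆ :=
  sub_eq_zero.mp <| (hd.sub_lie C).map_units_inv_eq_zero (sub_eq_zero.mpr hu)

theorem map_zero_eq_lie (hd : IsLeibniz d) (C : D) : d 0 = ⁅C, 0⁆ := by
  rw [hd.map_zero, lie_zero]

theorem map_ite_eq_lie (hd : IsLeibniz d) {C x : D} (hx : d x = ⁅C, x⁆) (p : Prop) [Decidable p] :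
    d (if p then x else 0) = ⁅C, if p then x else 0⁆ := by
  split_ifs
  exacts [hx, hd.map_zero_eq_lie C]

theorem map_conj (hd : IsLeibniz d) {u e : Dˣ} {C : D} (hu : d u = C * u) (he : d e = 0) :
    d ↑(u * e * u⁻¹) = ⁅C, ↑(u * e * u⁻¹)⁆ := by
  have hinv : d ↑u⁻¹ = -(↑u⁻¹ * C) := by
    rw [hd.map_units_inv, hu, mul_assoc, mul_assoc, Units.mul_inv, mul_one]
  simp only [Units.val_mul, hd.map_mul, hu, he, hinv, Ring.lie_def]
  noncomm_ring

theorem map_map_comm_of_zero_curvature (hd₁ : IsLeibniz d₁) (hd₂ : IsLeibniz d₂) {x A B : D}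
    (hA : d₁ x = A * x) (hB : d₂ x = B * x) (h : d₁ B - d₂ A = ⁅A, B⁆) :
    d₁ (d₂ x) = d₂ (d₁ x) := by
  rw [hA, hB, hd₁.map_mul, hd₂.map_mul, hA, hB, ← sub_eq_zero]
  rw [← sub_eq_zero, Ring.lie_def] at h
  calc _ = (d₁ B - d₂ A - (A * B - B * A)) * x := by noncomm_ring
    _ = 0 := by rw [h, zero_mul]

end IsLeibniz

structure IsSplitting (pos neg : D → D) : Prop where
  pos_add_neg : ∀ x, pos x + neg x = x
  map_add : ∀ x y, pos (x + y) = pos x + pos y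
  pos_mul : ∀ x y, pos (pos x * pos y) = pos x * pos y
  neg_mul : ∀ x y, neg (neg x * neg y) = neg x * neg y

namespace IsSplitting

variable {pos neg d₁ d₂ : D → D}

theorem pos_sub (hs : IsSplitting pos neg) (x y : D) : pos (x - y) = pos x - pos y :=
  (AddMonoidHom.mk' pos hs.map_add).map_sub x y

theorem pos_eq (hs : IsSplitting pos neg) (x : D) : pos x = x - neg x :=
  eq_sub_of_add_eq (hs.pos_add_neg x)

theorem neg_eq (hs : IsSplitting pos neg) (x : D) : neg x = x - pos x :=
  eq_sub_of_add_eq' (hs.pos_add_neg x)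

theorem neg_add (hs : IsSplitting pos neg) (x y : D) : neg (x + y) = neg x + neg y := by
  rw [hs.neg_eq, hs.neg_eq x, hs.neg_eq y, hs.map_add]
  abel

theorem neg_sub (hs : IsSplitting pos neg) (x y : D) : neg (x - y) = neg x - neg y := by
  rw [hs.neg_eq, hs.neg_eq x, hs.neg_eq y, hs.pos_sub]
  abel

theorem pos_lie_pos (hs : IsSplitting pos neg) (x y : D) :
    pos ⁅pos x, pos y⁆ = ⁅pos x, pos y⁆ := by
  rw [Ring.lie_def, hs.pos_sub, hs.pos_mul, hs.pos_mul]

theorem neg_lie_neg (hs : IsSplitting pos neg) (x y : D) :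
    neg ⁅neg x, neg y⁆ = ⁅neg x, neg y⁆ := by
  rw [Ring.lie_def, hs.neg_sub, hs.neg_mul, hs.neg_mul]

theorem pos_lie_neg (hs : IsSplitting pos neg) (x y : D) : pos ⁅neg x, neg y⁆ = 0 := by
  rw [hs.pos_eq, hs.neg_lie_neg, sub_self]

theorem neg_lie_pos (hs : IsSplitting pos neg) (x y : D) : neg ⁅pos x, pos y⁆ = 0 := by
  rw [hs.neg_eq, hs.pos_lie_pos, sub_self]

theorem lie_pos_add_lie_neg (hs : IsSplitting pos neg) (x y : D) :
    ⁅pos x, y⁆ + ⁅neg y, x⁆ = ⁅pos x, pos y⁆ + ⁅neg y, neg x⁆ := by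
  calc ⁅pos x, y⁆ + ⁅neg y, x⁆ = ⁅pos x, pos y + neg y⁆ + ⁅neg y, pos x + neg x⁆ := by
        rw [hs.pos_add_neg, hs.pos_add_neg]
    _ = ⁅pos x, pos y⁆ + ⁅neg y, neg x⁆ := by
        rw [lie_add, lie_add, ← lie_skew (pos x) (neg y)]
        abel

theorem pos_lie_pos_add_lie_neg (hs : IsSplitting pos neg) (x y : D) :
    pos (⁅pos x, y⁆ + ⁅neg y, x⁆) = ⁅pos x, pos y⁆ := by
  rw [hs.lie_pos_add_lie_neg, hs.map_add, hs.pos_lie_pos, hs.pos_lie_neg, add_zero]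

theorem neg_lie_pos_add_lie_neg (hs : IsSplitting pos neg) (x y : D) :
    neg (⁅pos x, y⁆ + ⁅neg y, x⁆) = ⁅neg y, neg x⁆ := by
  rw [hs.lie_pos_add_lie_neg, hs.neg_add, hs.neg_lie_pos, hs.neg_lie_neg, zero_add]

theorem lie_neg_neg_of_commute (hs : IsSplitting pos neg) {x y : D} (h : Commute x y) :
    ⁅-neg x, y⁆ = ⁅pos x, y⁆ := by
  rw [hs.pos_eq, sub_lie, h.lie_eq, zero_sub, neg_lie]

theorem map_neg_of_map_pos (hs : IsSplitting pos neg) {d : D → D} (hd : IsLeibniz d)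
    (hpos : ∀ x, d (pos x) = pos (d x)) (x : D) : d (neg x) = neg (d x) := by
  rw [hs.neg_eq, hd.map_sub, hpos, ← hs.neg_eq]

theorem zero_curvature_neg (hs : IsSplitting pos neg) (hd₁ : IsLeibniz d₁) (hd₂ : IsLeibniz d₂)
    (h₁ : ∀ x, d₁ (pos x) = pos (d₁ x)) (h₂ : ∀ x, d₂ (pos x) = pos (d₂ x)) {X Y : D}
    (hY : d₁ Y = ⁅pos X, Y⁆) (hX : d₂ X = ⁅-neg Y, X⁆) :
    d₁ (-neg Y) - d₂ (-neg X) = ⁅-neg X, -neg Y⁆ := by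
  have hXY : neg (d₁ Y - d₂ X) = ⁅neg Y, neg X⁆ := by
    rw [hY, hX, neg_lie, sub_neg_eq_add, hs.neg_lie_pos_add_lie_neg]
  rw [hd₁.map_neg, hd₂.map_neg, hs.map_neg_of_map_pos hd₁ h₁, hs.map_neg_of_map_pos hd₂ h₂,
    lie_neg, neg_lie, neg_neg, ← lie_skew, ← hXY, hs.neg_sub]
  abel

theorem zero_curvature_pos (hs : IsSplitting pos neg) (hd₁ : IsLeibniz d₁) (hd₂ : IsLeibniz d₂)
    (h₁ : ∀ x, d₁ (pos x) = pos (d₁ x)) (h₂ : ∀ x, d₂ (pos x) = pos (d₂ x)) {X Y c c' : D}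
    (hY : d₁ Y = ⁅pos X, Y⁆) (hX : d₂ X = ⁅-neg Y, X⁆)
    (hc : d₂ c = ⁅pos Y, c⁆) (hc' : d₁ c' = ⁅pos X, c'⁆) (hcc : Commute c c') :
    d₁ (pos Y - c') - d₂ (pos X - c) = ⁅pos X - c, pos Y - c'⁆ := by
  have hXY : d₁ (pos Y) - d₂ (pos X) = ⁅pos X, pos Y⁆ := by
    rw [h₁, h₂, ← hs.pos_sub, hY, hX, neg_lie, sub_neg_eq_add, hs.pos_lie_pos_add_lie_neg]
  rw [hd₁.map_sub, hd₂.map_sub, sub_sub_sub_comm, hXY, hc, hc', sub_lie, lie_sub, lie_sub,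
    hcc.lie_eq, ← lie_skew c]
  abel

theorem map_map_comm_of_neg (hs : IsSplitting pos neg) (hd₁ : IsLeibniz d₁)
    (hd₂ : IsLeibniz d₂) (h₁ : ∀ x, d₁ (pos x) = pos (d₁ x)) (h₂ : ∀ x, d₂ (pos x) = pos (d₂ x))
    {x : D} {U V : Dˣ} {k l : ℕ} (hx₁ : d₁ x = -neg ↑(U ^ k) * x) (hx₂ : d₂ x = -neg ↑(V ^ l) * x)
    (hV : d₁ V = ⁅pos ↑(U ^ k), (V : D)⁆) (hU : d₂ U = ⁅-neg ↑(V ^ l), (U : D)⁆) :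
    d₁ (d₂ x) = d₂ (d₁ x) :=
  hd₁.map_map_comm_of_zero_curvature hd₂ hx₁ hx₂ <| hs.zero_curvature_neg hd₁ hd₂ h₁ h₂
    (hd₁.map_units_pow_eq_lie hV l) (hd₂.map_units_pow_eq_lie hU k)

theorem map_map_comm_of_pos (hs : IsSplitting pos neg) (hd₁ : IsLeibniz d₁)
    (hd₂ : IsLeibniz d₂) (h₁ : ∀ x, d₁ (pos x) = pos (d₁ x)) (h₂ : ∀ x, d₂ (pos x) = pos (d₂ x))
    {x c c' : D} {U V : Dˣ} {k l : ℕ} (hx₁ : d₁ x = (pos ↑(U ^ k) - c) * x)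
    (hx₂ : d₂ x = (pos ↑(V ^ l) - c') * x)
    (hV : d₁ V = ⁅pos ↑(U ^ k), (V : D)⁆) (hU : d₂ U = ⁅-neg ↑(V ^ l), (U : D)⁆)
    (hc : d₂ c = ⁅pos ↑(V ^ l), c⁆) (hc' : d₁ c' = ⁅pos ↑(U ^ k), c'⁆) (hcc : Commute c c') :
    d₁ (d₂ x) = d₂ (d₁ x) :=
  hd₁.map_map_comm_of_zero_curvature hd₂ hx₁ hx₂ <| hs.zero_curvature_pos hd₁ hd₂ h₁ h₂
    (hd₁.map_units_pow_eq_lie hV l) (hd₂.map_units_pow_eq_lie hU k) hc hc' hcc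

end IsSplitting

theorem sub_lie_of_commute {a c y : D} (h : Commute c y) : ⁅a - c, y⁆ = ⁅a, y⁆ := by
  rw [sub_lie, h.lie_eq, sub_zero]

theorem Commute.ite_units_inv_left {u : Dˣ} {x : D} (p : Prop) [Decidable p]
    (h : Commute (u : D) x) : Commute (if p then (↑u⁻¹ : D) else 0) x := by
  split_ifs
  exacts [h.units_inv_left, Commute.zero_left x]

end

theorem stmt_7 {D : Type*} [Ring D]
    (pos neg : D → D)
    (hsplit : ∀ x, pos x + neg x = x)
    (hpos_add : ∀ x y, pos (x + y) = pos x + pos y)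
    (hpos_mul : ∀ x y, pos (pos x * pos y) = pos x * pos y)
    (hneg_mul : ∀ x y, neg (neg x * neg y) = neg x * neg y)
    (del Φ Φh : Dˣ)
    (T Th : ℕ → D → D)
    (hT_add : ∀ k x y, T k (x + y) = T k x + T k y)
    (hT_mul : ∀ k x y, T k (x * y) = T k x * y + x * T k y)
    (hT_pos : ∀ k x, T k (pos x) = pos (T k x))
    (hT_del : ∀ k, T k (del : D) = 0)
    (hTh_add : ∀ k x y, Th k (x + y) = Th k x + Th k y)
    (hTh_mul : ∀ k x y, Th k (x * y) = Th k x * y + x * Th k y)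
    (hTh_pos : ∀ k x, Th k (pos x) = pos (Th k x))
    (hTh_del : ∀ k, Th k (del : D) = 0) :
    let P : Dˣ := Φ * del * Φ⁻¹
    let Ph : Dˣ := Φh * del⁻¹ * Φh⁻¹
    -- the extended KP hierarchy:
    (∀ k : ℕ, 1 ≤ k →
      T k (Φ : D) = -(neg ((P ^ k : Dˣ) : D)) * (Φ : D)) →
    (∀ k : ℕ, 1 ≤ k →
      T k (Φh : D)
        = (pos ((P ^ k : Dˣ) : D) - (if k = 1 then ((Ph⁻¹ : Dˣ) : D) else 0))
            * (Φh : D)) →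
    (∀ k : ℕ, 1 ≤ k →
      Th k (Φ : D) = -(neg ((Ph ^ k : Dˣ) : D)) * (Φ : D)) →
    (∀ k : ℕ, 1 ≤ k →
      Th k (Φh : D) = pos ((Ph ^ k : Dˣ) : D) * (Φh : D)) →
    -- the Lax equations:
    ((∀ k : ℕ, 1 ≤ k →
      T k (P : D)
        = pos ((P ^ k : Dˣ) : D) * (P : D) - (P : D) * pos ((P ^ k : Dˣ) : D)) ∧
     (∀ k : ℕ, 1 ≤ k →
      T k (Ph : D)
        = pos ((P ^ k : Dˣ) : D) * (Ph : D) - (Ph : D) * pos ((P ^ k : Dˣ) : D)) ∧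
     (∀ k : ℕ, 1 ≤ k →
      Th k (P : D)
        = -(neg ((Ph ^ k : Dˣ) : D)) * (P : D) - (P : D) * -(neg ((Ph ^ k : Dˣ) : D))) ∧
     (∀ k : ℕ, 1 ≤ k →
      Th k (Ph : D)
        = -(neg ((Ph ^ k : Dˣ) : D)) * (Ph : D) - (Ph : D) * -(neg ((Ph ^ k : Dˣ) : D))) ∧
     -- pairwise commutativity of the flows on Φ and Φ̂:
     (∀ k l : ℕ, 1 ≤ k → 1 ≤ l →
      T k (T l (Φ : D)) = T l (T k (Φ : D)) ∧
      T k (Th l (Φ : D)) = Th l (T k (Φ : D)) ∧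
      Th k (Th l (Φ : D)) = Th l (Th k (Φ : D)) ∧
      T k (T l (Φh : D)) = T l (T k (Φh : D)) ∧
      T k (Th l (Φh : D)) = Th l (T k (Φh : D)) ∧
      Th k (Th l (Φh : D)) = Th l (Th k (Φh : D)))) := by
  intro P Ph hTΦ hTΦh hThΦ hThΦh
  let _ : LieRing D := .ofAssociativeRing
  have hs : IsSplitting pos neg := ⟨hsplit, hpos_add, hpos_mul, hneg_mul⟩
  have hT k : IsLeibniz (T k) := ⟨hT_add k, hT_mul k⟩
  have hTh k : IsLeibniz (Th k) := ⟨hTh_add k, hTh_mul k⟩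
  have hc k {x : D} (h : Commute (Ph : D) x) : Commute (if k = 1 then ↑Ph⁻¹ else 0) x :=
    h.ite_units_inv_left _
  have laxTP k (hk : 1 ≤ k) : T k P = ⁅-neg ↑(P ^ k), (P : D)⁆ :=
    (hT k).map_conj (hTΦ k hk) (hT_del k)
  have laxTP' k (hk : 1 ≤ k) : T k P = ⁅pos ↑(P ^ k), (P : D)⁆ := by
    rw [laxTP k hk, hs.lie_neg_neg_of_commute ((Commute.refl P).pow_left k).units_val]
  have laxTPh k (hk : 1 ≤ k) : T k Ph = ⁅pos ↑(P ^ k), (Ph : D)⁆ := by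
    rw [(hT k).map_conj (hTΦh k hk) ((hT k).map_units_inv_eq_zero (hT_del k)),
      sub_lie_of_commute (hc k (.refl _))]
  have laxThP k (hk : 1 ≤ k) : Th k P = ⁅-neg ↑(Ph ^ k), (P : D)⁆ :=
    (hTh k).map_conj (hThΦ k hk) (hTh_del k)
  have laxThPh k (hk : 1 ≤ k) : Th k Ph = ⁅pos ↑(Ph ^ k), (Ph : D)⁆ :=
    (hTh k).map_conj (hThΦh k hk) ((hTh k).map_units_inv_eq_zero (hTh_del k))
  have laxThPh' k (hk : 1 ≤ k) : Th k Ph = ⁅-neg ↑(Ph ^ k), (Ph : D)⁆ := by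
    rw [laxThPh k hk, hs.lie_neg_neg_of_commute ((Commute.refl Ph).pow_left k).units_val]
  have hThΦh₀ l (hl : 1 ≤ l) : Th l Φh = (pos ↑(Ph ^ l) - 0) * Φh := by
    rw [sub_zero]; exact hThΦh l hl
  refine ⟨laxTP', laxTPh, laxThP, laxThPh', fun k l hk hl => ⟨?_, ?_, ?_, ?_, ?_, ?_⟩⟩
  · exact hs.map_map_comm_of_neg (hT k) (hT l) (hT_pos k) (hT_pos l) (hTΦ k hk) (hTΦ l hl)
      (laxTP' k hk) (laxTP l hl)
  · exact hs.map_map_comm_of_neg (hT k) (hTh l) (hT_pos k) (hTh_pos l) (hTΦ k hk) (hThΦ l hl)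
      (laxTPh k hk) (laxThP l hl)
  · exact hs.map_map_comm_of_neg (hTh k) (hTh l) (hTh_pos k) (hTh_pos l) (hThΦ k hk)
      (hThΦ l hl) (laxThPh k hk) (laxThPh' l hl)
  · exact hs.map_map_comm_of_pos (hT k) (hT l) (hT_pos k) (hT_pos l) (hTΦh k hk) (hTΦh l hl)
      (laxTP' k hk) (laxTP l hl)
      ((hT l).map_ite_eq_lie ((hT l).map_units_inv_eq_lie (laxTPh l hl)) _)
      ((hT k).map_ite_eq_lie ((hT k).map_units_inv_eq_lie (laxTPh k hk)) _)
      (hc k (hc l (.refl _)).symm)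
  · exact hs.map_map_comm_of_pos (hT k) (hTh l) (hT_pos k) (hTh_pos l) (hTΦh k hk)
      (hThΦh₀ l hl) (laxTPh k hk) (laxThP l hl)
      ((hTh l).map_ite_eq_lie ((hTh l).map_units_inv_eq_lie (laxThPh l hl)) _)
      ((hT k).map_zero_eq_lie _) (.zero_right _)
  · exact hs.map_map_comm_of_pos (hTh k) (hTh l) (hTh_pos k) (hTh_pos l) (hThΦh₀ k hk)
      (hThΦh₀ l hl) (laxThPh k hk) (laxThPh' l hl) ((hTh l).map_zero_eq_lie _)
      ((hTh k).map_zero_eq_lie _) (.zero_left _)
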